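/- arXiv:2312.15847 — 4 statements merged into one kernel-verified Lean document; each statement's English description precedes it below -/
import Mathlib

section
/- Let ξ be a random vector in ℝⁿ on a probability space with E[ξ] = 0 and E[‖ξ‖^δ] ≤ ν^δ, where δ ∈ (1,2] and ν > 0. Let G ∈ ℝⁿ be a fixed vector with ‖G‖ ≤ C₀ for some C₀ ≥ 0, set g = G + ξ, and let τ be a real number with τ ≥ 2C₀ and τ > 0. Then the bias of the clipped vector satisfies ‖E[clip_τ(g)] − G‖ ≤ (2ν)^δ τ^{1−δ}. -/
/-!
Clipping only moves a vector `g` with `‖g‖ > τ`, and then by `‖g‖ - τ`. Since `‖G‖ ≤ C₀ ≤ τ / 2`,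
this excess is at most `max (2‖ξ‖ - τ) 0`, which is bounded by `(2‖ξ‖)^δ τ^(1-δ)` because
`δ ≥ 1` makes `t ↦ t^δ τ^(1-δ)` dominate `t` once `t ≥ τ`. As `E[g] = G`, the bias
`E[clip g] - G = E[clip g - g]` is then controlled by the `δ`-th moment of `ξ`.
-/

open MeasureTheory

/-- The gradient clipping operator: `clip τ x = min {1, τ/‖x‖} • x` (which equals `x` when
`x = 0`, since in Lean `τ / 0 = 0` and `(0 : ℝ) • (0 : _) = 0`). -/
noncomputable def clip {n : ℕ} (τ : ℝ) (x : EuclideanSpace ℝ (Fin n)) : EuclideanSpace ℝ (Fin n) :=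
  min 1 (τ / ‖x‖) • x

lemma max_sub_zero_le_rpow_mul_rpow_one_sub {t τ δ : ℝ} (ht : 0 ≤ t) (hτ : 0 < τ) (hδ : 1 ≤ δ) :
    max (t - τ) 0 ≤ t ^ δ * τ ^ (1 - δ) := by
  refine max_le ?_ (by positivity)
  rcases le_or_gt t τ with htτ | hτt
  · linarith [show 0 ≤ t ^ δ * τ ^ (1 - δ) by positivity]
  · have ht0 : 0 < t := hτ.trans hτt
    calc t - τ ≤ t := by linarith
      _ = t ^ δ * t ^ (1 - δ) := by rw [← Real.rpow_add ht0]; simp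
      _ ≤ t ^ δ * τ ^ (1 - δ) := mul_le_mul_of_nonneg_left
        (Real.rpow_le_rpow_of_nonpos hτ hτt.le (by linarith)) (by positivity)

section Clip

variable {n : ℕ} {τ : ℝ}

lemma clip_of_norm_le {x : EuclideanSpace ℝ (Fin n)} (h : ‖x‖ ≤ τ) : clip τ x = x := by
  rcases eq_or_ne x 0 with rfl | hx
  · simp [clip]
  · rw [clip, min_eq_left ((one_le_div (norm_pos_iff.mpr hx)).mpr h), one_smul]

lemma norm_clip_sub_self (hτ : 0 ≤ τ) (x : EuclideanSpace ℝ (Fin n)) :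
    ‖clip τ x - x‖ = max (‖x‖ - τ) 0 := by
  rcases le_or_gt ‖x‖ τ with h | h
  · rw [clip_of_norm_le h, sub_self, norm_zero, max_eq_right (by linarith)]
  · have hx : 0 < ‖x‖ := hτ.trans_lt h
    have hratio : τ / ‖x‖ ≤ 1 := (div_le_one hx).mpr h.le
    have hsub : (τ / ‖x‖) • x - x = (τ / ‖x‖ - 1) • x := by rw [sub_smul, one_smul]
    rw [clip, min_eq_right hratio, hsub, norm_smul, Real.norm_eq_abs,
      abs_of_nonpos (by linarith), max_eq_left (by linarith)]
    field_simp
    ring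

lemma norm_clip_le (hτ : 0 ≤ τ) (x : EuclideanSpace ℝ (Fin n)) : ‖clip τ x‖ ≤ τ := by
  rcases le_or_gt ‖x‖ τ with h | h
  · rwa [clip_of_norm_le h]
  · have hx : 0 < ‖x‖ := hτ.trans_lt h
    rw [clip, min_eq_right ((div_le_one hx).mpr h.le), norm_smul, Real.norm_eq_abs,
      abs_of_nonneg (by positivity), div_mul_cancel₀ _ hx.ne']

lemma measurable_clip : Measurable (clip (n := n) τ) := by
  unfold clip
  fun_prop

lemma norm_clip_add_sub_le {δ C₀ : ℝ} (hδ : 1 ≤ δ) (hτC : 2 * C₀ ≤ τ) (hτ : 0 < τ)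
    {G : EuclideanSpace ℝ (Fin n)} (hG : ‖G‖ ≤ C₀) (x : EuclideanSpace ℝ (Fin n)) :
    ‖clip τ (G + x) - (G + x)‖ ≤ (2 * ‖x‖) ^ δ * τ ^ (1 - δ) := by
  have hexcess : ‖G + x‖ - τ ≤ max (2 * ‖x‖ - τ) 0 := by
    have := norm_add_le G x
    rcases le_total 0 (2 * ‖x‖ - τ) with h | h
    · linarith [le_max_left (2 * ‖x‖ - τ) 0]
    · linarith [le_max_right (2 * ‖x‖ - τ) 0]
  rw [norm_clip_sub_self hτ.le]
  exact (max_le hexcess (le_max_right _ _)).trans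
    (max_sub_zero_le_rpow_mul_rpow_one_sub (by positivity) hτ hδ)

end Clip

theorem stmt_3_general {n : ℕ} {Ω : Type*} [MeasurableSpace Ω] (μ : Measure Ω) [IsProbabilityMeasure μ]
    (ξ : Ω → EuclideanSpace ℝ (Fin n))
    (hint : Integrable ξ μ) (hmean : ∫ ω, ξ ω ∂μ = 0)
    (δ ν : ℝ) (hδ1 : 1 < δ) (hν : 0 < ν)
    (hmom_int : Integrable (fun ω => ‖ξ ω‖ ^ δ) μ)
    (hmom : ∫ ω, ‖ξ ω‖ ^ δ ∂μ ≤ ν ^ δ)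
    (G : EuclideanSpace ℝ (Fin n)) (C₀ : ℝ) (hG : ‖G‖ ≤ C₀)
    (τ : ℝ) (hτC : 2 * C₀ ≤ τ) (hτ : 0 < τ) :
    ‖(∫ ω, clip τ (G + ξ ω) ∂μ) - G‖ ≤ (2 * ν) ^ δ * τ ^ (1 - δ) := by
  have hg_int : Integrable (fun ω => G + ξ ω) μ := (integrable_const G).add hint
  have hclip_int : Integrable (fun ω => clip τ (G + ξ ω)) μ :=
    (integrable_const τ).mono'
      (measurable_clip.comp_aemeasurable hg_int.aemeasurable).aestronglyMeasurable
      (ae_of_all _ fun ω => norm_clip_le hτ.le _)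
  have hbias : (∫ ω, clip τ (G + ξ ω) ∂μ) - G = ∫ ω, (clip τ (G + ξ ω) - (G + ξ ω)) ∂μ := by
    rw [integral_sub hclip_int hg_int, integral_add (integrable_const G) hint, hmean,
      integral_const, probReal_univ, one_smul, add_zero]
  have hbound : ∀ ω, (2 * ‖ξ ω‖) ^ δ * τ ^ (1 - δ) = 2 ^ δ * τ ^ (1 - δ) * ‖ξ ω‖ ^ δ :=
    fun ω => by rw [Real.mul_rpow zero_le_two (norm_nonneg _)]; ring
  calc ‖(∫ ω, clip τ (G + ξ ω) ∂μ) - G‖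
      ≤ ∫ ω, ‖clip τ (G + ξ ω) - (G + ξ ω)‖ ∂μ := hbias ▸ norm_integral_le_integral_norm _
    _ ≤ ∫ ω, 2 ^ δ * τ ^ (1 - δ) * ‖ξ ω‖ ^ δ ∂μ :=
        integral_mono (hclip_int.sub hg_int).norm (hmom_int.const_mul _)
          fun ω => hbound ω ▸ norm_clip_add_sub_le hδ1.le hτC hτ hG (ξ ω)
    _ = 2 ^ δ * τ ^ (1 - δ) * ∫ ω, ‖ξ ω‖ ^ δ ∂μ := integral_const_mul _ _
    _ ≤ 2 ^ δ * τ ^ (1 - δ) * ν ^ δ := by gcongr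
    _ = (2 * ν) ^ δ * τ ^ (1 - δ) := by rw [Real.mul_rpow zero_le_two hν.le]; ring

theorem stmt_3 {n : ℕ} {Ω : Type*} [MeasurableSpace Ω] (μ : Measure Ω) [IsProbabilityMeasure μ]
    (ξ : Ω → EuclideanSpace ℝ (Fin n)) (hmeas : AEStronglyMeasurable ξ μ)
    (hint : Integrable ξ μ) (hmean : ∫ ω, ξ ω ∂μ = 0)
    (δ ν : ℝ) (hδ1 : 1 < δ) (hδ2 : δ ≤ 2) (hν : 0 < ν)
    (hmom_int : Integrable (fun ω => ‖ξ ω‖ ^ δ) μ)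
    (hmom : ∫ ω, ‖ξ ω‖ ^ δ ∂μ ≤ ν ^ δ)
    (G : EuclideanSpace ℝ (Fin n)) (C₀ : ℝ) (hC₀ : 0 ≤ C₀) (hG : ‖G‖ ≤ C₀)
    (τ : ℝ) (hτC : 2 * C₀ ≤ τ) (hτ : 0 < τ) :
    ‖(∫ ω, clip τ (G + ξ ω) ∂μ) - G‖ ≤ (2 * ν) ^ δ * τ ^ (1 - δ) :=
  stmt_3_general μ ξ hint hmean δ ν hδ1 hν hmom_int hmom G C₀ hG τ hτC hτ
end

section
/- Let N > 1 and let A = (a_{ij}) be an N×N doubly stochastic matrix. Suppose there exists 0 < η < 1 such that a_{ii} ≥ η for every i and a_{ij} ≥ η whenever a_{ij} > 0, and suppose the directed graph on vertices {1,…,N} with edge set E = {(j,i) : i ≠ j, a_{ij} > 0} is strongly connected (i.e., for every ordered pair of distinct vertices there is a directed path from one to the other). Let Q = |E| be the number of edges. Then for every integer k > 0 and all indices i, j: |[A^k]_{ij} − 1/N| ≤ θ β^k, where θ = (1 − η/(4N²))^{−2} and β = (1 − η/(4N²))^{1/Q}. -/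
/-!
For a doubly stochastic `A` one has `‖x‖² - ‖Ax‖² = ∑ᵢ ∑ⱼ aᵢⱼ (xⱼ - (Ax)ᵢ)²`. An edge `p → q`
contributes at least `η (x_p - x_q)² / 2` to the `q`-th inner sum, so Cauchy–Schwarz along the
paths given by strong connectivity bounds every `(xᵢ - xⱼ)²` by `2N/η` times this dissipation.
For `x` of mean zero `∑ᵢ ∑ⱼ (xᵢ - xⱼ)² = 2N‖x‖²`, hence `‖Ax‖² ≤ (1 - η/N²)‖x‖²
≤ (1 - η/(4N²))²‖x‖²`. Iterating on `eⱼ - 𝟙/N` gives `|[Aᵏ]ᵢⱼ - 1/N| ≤ (1 - η/(4N²))ᵏ`, which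
is at most the stated bound.
-/

open Finset

theorem add_sq_le_of_sq_le_mul {a b α β n : ℝ} (hn : 0 < n) (ha : a ^ 2 ≤ n * α)
    (hb : b ^ 2 ≤ β) : (a + b) ^ 2 ≤ (n + 1) * (α + β) := by
  have h : n * (2 * a * b) ≤ n * (α + n * β) := by
    nlinarith [sq_nonneg (a - n * b), mul_le_mul_of_nonneg_left hb hn.le]
  nlinarith [le_of_mul_le_mul_left h hn]

namespace Relation.TransGen

variable {ι : Type*} [DecidableEq ι] {r : ι → ι → Prop} {x T : ι → ℝ} {u v : ι}

/-- Carrying the whole visited set, rather than a path, lets a revisited vertex be skipped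
without extracting a simple path. -/
theorem exists_finset_sq_sub_le (hT : ∀ i, 0 ≤ T i)
    (hr : ∀ p q, r p q → (x p - x q) ^ 2 ≤ T q) (h : TransGen r u v) :
    ∃ S : Finset ι, v ∈ S ∧ ∀ w ∈ S, (x u - x w) ^ 2 ≤ #S * ∑ i ∈ S, T i := by
  induction h with
  | @single v huv => exact ⟨{v}, mem_singleton_self v, by simpa using hr u v huv⟩
  | @tail w v _ hwv ih =>
    obtain ⟨S, hwS, hS⟩ := ih
    by_cases hvS : v ∈ S
    · exact ⟨S, hvS, hS⟩
    refine ⟨insert v S, mem_insert_self v S, ?_⟩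
    have hST : 0 ≤ ∑ i ∈ S, T i := sum_nonneg fun i _ => hT i
    have hinsert : #(insert v S) * ∑ i ∈ insert v S, T i
        = (#S + 1 : ℝ) * (∑ i ∈ S, T i + T v) := by
      rw [card_insert_of_notMem hvS, sum_insert hvS]; push_cast; ring
    rw [hinsert]
    intro w' hw'
    rcases mem_insert.mp hw' with rfl | hw'
    · calc (x u - x w') ^ 2 = ((x u - x w) + (x w - x w')) ^ 2 := by ring
        _ ≤ _ := add_sq_le_of_sq_le_mul (by exact_mod_cast card_pos.mpr ⟨w, hwS⟩)
          (hS w hwS) (hr w w' hwv)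
    · calc (x u - x w') ^ 2 ≤ #S * ∑ i ∈ S, T i := hS w' hw'
        _ ≤ _ := by nlinarith [hT v]

theorem sq_sub_le_card_mul_sum [Fintype ι] (hT : ∀ i, 0 ≤ T i)
    (hr : ∀ p q, r p q → (x p - x q) ^ 2 ≤ T q) (h : TransGen r u v) :
    (x u - x v) ^ 2 ≤ Fintype.card ι * ∑ i, T i := by
  obtain ⟨S, hvS, hS⟩ := h.exists_finset_sq_sub_le hT hr
  calc (x u - x v) ^ 2 ≤ #S * ∑ i ∈ S, T i := hS v hvS
    _ ≤ Fintype.card ι * ∑ i, T i := by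
      gcongr
      · exact sum_nonneg fun i _ => hT i
      · exact card_le_univ S
      · exact fun i _ _ => hT i
      · exact subset_univ S

end Relation.TransGen

theorem sum_sum_sub_sq {ι : Type*} [Fintype ι] (x : ι → ℝ) :
    ∑ i, ∑ j, (x i - x j) ^ 2 = 2 * (Fintype.card ι * ∑ i, x i ^ 2 - (∑ i, x i) ^ 2) := by
  simp only [sub_sq, sum_add_distrib, sum_sub_distrib, sum_const, card_univ, nsmul_eq_mul,
    ← mul_sum, ← sum_mul, mul_assoc]
  ring

namespace Matrix

variable {ι : Type*} [Fintype ι] [DecidableEq ι] {M : Matrix ι ι ℝ}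

theorem sum_sq_sub_sum_sq_mulVec (hM : M ∈ doublyStochastic ℝ ι) (x : ι → ℝ) :
    ∑ i, x i ^ 2 - ∑ i, (M *ᵥ x) i ^ 2 = ∑ i, ∑ j, M i j * (x j - (M *ᵥ x) i) ^ 2 := by
  have hrow (i : ι) : ∑ j, M i j * (x j - (M *ᵥ x) i) ^ 2
      = ∑ j, M i j * x j ^ 2 - (M *ᵥ x) i ^ 2 := by
    have hy : (M *ᵥ x) i = ∑ j, M i j * x j := rfl
    have expand (j : ι) : M i j * (x j - (M *ᵥ x) i) ^ 2
        = M i j * x j ^ 2 - 2 * (M *ᵥ x) i * (M i j * x j) + (M *ᵥ x) i ^ 2 * M i j := by ring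
    simp only [expand, sum_add_distrib, sum_sub_distrib, ← mul_sum, ← hy,
      sum_row_of_mem_doublyStochastic hM i]
    ring
  have hcol : ∑ i, ∑ j, M i j * x j ^ 2 = ∑ j, x j ^ 2 := by
    rw [sum_comm]
    simp only [← sum_mul, sum_col_of_mem_doublyStochastic hM, one_mul]
  simp only [hrow, sum_sub_distrib, hcol]

theorem mul_sq_sub_le_two_mul_sum {η : ℝ} {p q : ι} (hη : 0 ≤ η) (hnonneg : ∀ j, 0 ≤ M q j)
    (hpq : p ≠ q) (hp : η ≤ M q p) (hq : η ≤ M q q) (x : ι → ℝ) (c : ℝ) :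
    η * (x p - x q) ^ 2 ≤ 2 * ∑ j, M q j * (x j - c) ^ 2 := by
  have hpair : M q p * (x p - c) ^ 2 + M q q * (x q - c) ^ 2 ≤ ∑ j, M q j * (x j - c) ^ 2 := by
    rw [← sum_pair (f := fun j => M q j * (x j - c) ^ 2) hpq]
    exact sum_le_sum_of_subset_of_nonneg (subset_univ _)
      fun j _ _ => mul_nonneg (hnonneg j) (sq_nonneg _)
  nlinarith [mul_le_mul_of_nonneg_right hp (sq_nonneg (x p - c)),
    mul_le_mul_of_nonneg_right hq (sq_nonneg (x q - c)),
    mul_nonneg hη (sq_nonneg (x p + x q - 2 * c))]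

theorem sum_sq_mulVec_le [Nonempty ι] (hM : M ∈ doublyStochastic ℝ ι) {η : ℝ} (hη : 0 < η)
    (hdiag : ∀ i, η ≤ M i i) (hpos : ∀ i j, 0 < M i j → η ≤ M i j)
    (hconn : ∀ u v, u ≠ v → Relation.TransGen (fun a b => a ≠ b ∧ 0 < M b a) u v)
    {x : ι → ℝ} (hx : ∑ i, x i = 0) :
    ∑ i, (M *ᵥ x) i ^ 2 ≤ (1 - η / Fintype.card ι ^ 2) * ∑ i, x i ^ 2 := by
  set N : ℝ := (Fintype.card ι : ℝ) with hN_def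
  set D : ι → ℝ := fun i => ∑ j, M i j * (x j - (M *ᵥ x) i) ^ 2
  have hN : 0 < N := by simp [N, Fintype.card_pos]
  have hD (i : ι) : 0 ≤ D i := sum_nonneg fun j _ => mul_nonneg (hM.1 i j) (sq_nonneg _)
  have hpair (i j : ι) : (x i - x j) ^ 2 ≤ N * ∑ q, 2 * D q / η := by
    rcases eq_or_ne i j with rfl | hij
    · simpa using mul_nonneg hN.le (sum_nonneg fun q _ => by have := hD q; positivity)
    refine (hconn i j hij).sq_sub_le_card_mul_sum (fun q => by have := hD q; positivity) ?_
    rintro p q ⟨hpq, hqp⟩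
    rw [le_div_iff₀' hη]
    exact mul_sq_sub_le_two_mul_sum hη.le (hM.1 q) hpq (hpos q p hqp) (hdiag q) x _
  have hgap : N * (η * ∑ i, x i ^ 2) ≤ N * (N ^ 2 * ∑ q, D q) := by
    calc N * (η * ∑ i, x i ^ 2) = η / 2 * ∑ i, ∑ j, (x i - x j) ^ 2 := by
          rw [sum_sum_sub_sq, hx]; ring
      _ ≤ η / 2 * ∑ _i : ι, ∑ _j : ι, N * ∑ q, 2 * D q / η := by
          gcongr with i _ j _; exact hpair i j
      _ = N * (N ^ 2 * ∑ q, D q) := by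
          simp only [sum_const, card_univ, ← hN_def, nsmul_eq_mul, ← sum_div, ← mul_sum]
          field_simp
  have hdiss : η / N ^ 2 * ∑ i, x i ^ 2 ≤ ∑ i, x i ^ 2 - ∑ i, (M *ᵥ x) i ^ 2 := by
    rw [div_mul_eq_mul_div, div_le_iff₀' (by positivity), sum_sq_sub_sum_sq_mulVec hM]
    exact le_of_mul_le_mul_left hgap hN
  rw [sub_mul, one_mul]
  linarith

theorem sum_sq_pow_mulVec_le (hM : M ∈ doublyStochastic ℝ ι) {ρ : ℝ} (hρ : 0 ≤ ρ)
    (hcontr : ∀ x : ι → ℝ, ∑ i, x i = 0 → ∑ i, (M *ᵥ x) i ^ 2 ≤ ρ * ∑ i, x i ^ 2)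
    (k : ℕ) {x : ι → ℝ} (hx : ∑ i, x i = 0) :
    ∑ i, (M ^ k *ᵥ x) i ^ 2 ≤ ρ ^ k * ∑ i, x i ^ 2 := by
  induction k generalizing x with
  | zero => simp
  | succ k ih =>
    calc ∑ i, (M ^ (k + 1) *ᵥ x) i ^ 2 = ∑ i, (M ^ k *ᵥ (M *ᵥ x)) i ^ 2 := by
          rw [pow_succ, mulVec_mulVec]
      _ ≤ ρ ^ k * ∑ i, (M *ᵥ x) i ^ 2 :=
          ih ((sum_mulVec_of_mem_doublyStochastic hM).trans hx)
      _ ≤ ρ ^ k * (ρ * ∑ i, x i ^ 2) := by gcongr; exact hcontr x hx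
      _ = ρ ^ (k + 1) * ∑ i, x i ^ 2 := by ring

theorem abs_pow_apply_sub_inv_card_le (hM : M ∈ doublyStochastic ℝ ι) {c : ℝ} (hc : 0 ≤ c)
    (hcontr : ∀ x : ι → ℝ, ∑ i, x i = 0 → ∑ i, (M *ᵥ x) i ^ 2 ≤ c ^ 2 * ∑ i, x i ^ 2)
    (k : ℕ) (i j : ι) :
    |(M ^ k) i j - 1 / Fintype.card ι| ≤ c ^ k := by
  have hN : (0 : ℝ) < Fintype.card ι := by exact_mod_cast Fintype.card_pos_iff.mpr ⟨i⟩
  set x : ι → ℝ := Pi.single j 1 - fun _ => 1 / (Fintype.card ι : ℝ)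
  have hx : ∑ l, x l = 0 := by
    simp [x, sum_sub_distrib, hN.ne']
  have hxsq : ∑ l, x l ^ 2 ≤ 1 := by
    have hsq (l : ι) : x l ^ 2 = x l * (Pi.single j 1 : ι → ℝ) l - x l / Fintype.card ι := by
      simp only [x, Pi.sub_apply]; ring
    rw [sum_congr rfl fun l _ => hsq l, sum_sub_distrib, ← sum_div, hx, zero_div, sub_zero,
      ← dotProduct, dotProduct_single, mul_one]
    simp [x, hN.le]
  have happly : (M ^ k *ᵥ x) i = (M ^ k) i j - 1 / Fintype.card ι := by
    have hconst : (fun _ => 1 / (Fintype.card ι : ℝ))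
        = (1 / (Fintype.card ι : ℝ)) • (1 : ι → ℝ) := by
      ext; simp
    rw [mulVec_sub, mulVec_single_one, hconst, mulVec_smul,
      mulVec_one_of_mem_doublyStochastic (pow_mem hM k)]
    simp
  have hsq : ((M ^ k) i j - 1 / Fintype.card ι) ^ 2 ≤ (c ^ k) ^ 2 := by
    calc ((M ^ k) i j - 1 / Fintype.card ι) ^ 2 ≤ ∑ l, (M ^ k *ᵥ x) l ^ 2 := by
          rw [← happly]
          exact single_le_sum (f := fun l => (M ^ k *ᵥ x) l ^ 2) (fun l _ => sq_nonneg _)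
            (mem_univ i)
      _ ≤ (c ^ 2) ^ k * ∑ l, x l ^ 2 := sum_sq_pow_mulVec_le hM (by positivity) hcontr k hx
      _ ≤ (c ^ 2) ^ k * 1 := by gcongr
      _ = (c ^ k) ^ 2 := by rw [mul_one, ← pow_mul, ← pow_mul, mul_comm]
  exact abs_le_of_sq_le_sq hsq (by positivity)

end Matrix

theorem stmt_6_general {N : ℕ} (A : Matrix (Fin N) (Fin N) ℝ)
    (hnonneg : ∀ i j, 0 ≤ A i j)
    (hrow : ∀ i, ∑ j, A i j = 1) (hcol : ∀ j, ∑ i, A i j = 1)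
    (η : ℝ) (hη0 : 0 < η) (hη1 : η < 1)
    (hdiag : ∀ i, η ≤ A i i)
    (hpos : ∀ i j, 0 < A i j → η ≤ A i j)
    (hconn : ∀ u v : Fin N, u ≠ v →
      Relation.TransGen (fun a b : Fin N => a ≠ b ∧ 0 < A b a) u v)
    (Q : ℕ) :
    ∀ k : ℕ, 0 < k → ∀ i j,
      |(A ^ k) i j - 1 / (N : ℝ)| ≤
        ((1 - η / (4 * (N : ℝ) ^ 2))⁻¹) ^ 2 *
          ((1 - η / (4 * (N : ℝ) ^ 2)) ^ ((1 : ℝ) / (Q : ℝ))) ^ k := by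
  intro k _ i j
  have hA : A ∈ doublyStochastic ℝ (Fin N) :=
    mem_doublyStochastic_iff_sum.mpr ⟨hnonneg, hrow, hcol⟩
  have hN : (1 : ℝ) ≤ N := by exact_mod_cast i.pos
  have : Nonempty (Fin N) := ⟨i⟩
  set t := η / (4 * (N : ℝ) ^ 2)
  have ht0 : 0 ≤ t := by positivity
  have ht1 : t < 1 := by
    rw [div_lt_one (by positivity)]
    nlinarith
  have hrate : 1 - η / (N : ℝ) ^ 2 ≤ (1 - t) ^ 2 := by
    have : η / (N : ℝ) ^ 2 = 4 * t := by simp only [t]; field_simp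
    nlinarith
  have hcontr (x : Fin N → ℝ) (hx : ∑ l, x l = 0) :
      ∑ l, A.mulVec x l ^ 2 ≤ (1 - t) ^ 2 * ∑ l, x l ^ 2 := by
    refine (Matrix.sum_sq_mulVec_le hA hη0 hdiag hpos hconn hx).trans ?_
    rw [Fintype.card_fin]
    gcongr
  calc |(A ^ k) i j - 1 / (N : ℝ)| ≤ (1 - t) ^ k := by
        simpa using Matrix.abs_pow_apply_sub_inv_card_le hA (by linarith) hcontr k i j
    _ ≤ ((1 - t) ^ ((1 : ℝ) / Q)) ^ k := by
        gcongr
        exact Real.self_le_rpow_of_le_one (by linarith) (by linarith)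
          (by rw [one_div]; exact Nat.cast_inv_le_one Q)
    _ ≤ ((1 - t)⁻¹) ^ 2 * ((1 - t) ^ ((1 : ℝ) / Q)) ^ k :=
        le_mul_of_one_le_left (by positivity)
          (one_le_pow₀ ((one_le_inv₀ (by linarith)).mpr (by linarith)))

theorem stmt_6 {N : ℕ} (hN : 1 < N) (A : Matrix (Fin N) (Fin N) ℝ)
    (hnonneg : ∀ i j, 0 ≤ A i j)
    (hrow : ∀ i, ∑ j, A i j = 1) (hcol : ∀ j, ∑ i, A i j = 1)
    (η : ℝ) (hη0 : 0 < η) (hη1 : η < 1)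
    (hdiag : ∀ i, η ≤ A i i)
    (hpos : ∀ i j, 0 < A i j → η ≤ A i j)
    (hconn : ∀ u v : Fin N, u ≠ v →
      Relation.TransGen (fun a b : Fin N => a ≠ b ∧ 0 < A b a) u v)
    (Q : ℕ)
    (hQ : Q = (Finset.univ.filter
      (fun p : Fin N × Fin N => p.1 ≠ p.2 ∧ 0 < A p.2 p.1)).card) :
    ∀ k : ℕ, 0 < k → ∀ i j,
      |(A ^ k) i j - 1 / (N : ℝ)| ≤
        ((1 - η / (4 * (N : ℝ) ^ 2))⁻¹) ^ 2 *
          ((1 - η / (4 * (N : ℝ) ^ 2)) ^ ((1 : ℝ) / (Q : ℝ))) ^ k :=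
  stmt_6_general A hnonneg hrow hcol η hη0 hη1 hdiag hpos hconn Q
end

section
/- Let Ω ⊆ ℝⁿ be a nonempty closed convex set, let f: ℝⁿ → ℝ be differentiable and strongly convex with modulus μ > 0 on Ω, let v, z ∈ Ω, let α ≥ 0 and τ ≥ 0, and let ĝ ∈ ℝⁿ satisfy ‖ĝ‖ ≤ τ. Set b = ĝ − ∇f(v). Then ‖P_Ω[v − α ĝ] − z‖² ≤ (1 − μα)‖v − z‖² − 2α( f(v) − f(z) ) − 2α ⟨b, v − z⟩ + α² τ². -/
/-! The nearest point `p` of the convex set to `v - α • ĝ` is no farther than `v - α • ĝ` from any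
`z ∈ Ω` (variational inequality). Expanding `‖v - α • ĝ - z‖²` and inserting the
strong convexity inequality at `(v, z)` gives the estimate; the surplus `μα‖v - z‖²` is discarded. -/

open scoped RealInnerProductSpace

section

variable {E : Type*} [NormedAddCommGroup E] [InnerProductSpace ℝ E]

theorem norm_sub_sq_le_of_isMinOn_norm_sub {K : Set E} (hK : Convex ℝ K) {u p z : E}
    (hp : p ∈ K) (hmin : IsMinOn (fun w => ‖u - w‖) K p) (hz : z ∈ K) :
    ‖p - z‖ ^ 2 ≤ ‖u - z‖ ^ 2 := by
  have hvar : ⟪u - p, z - p⟫ ≤ 0 :=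
    (norm_eq_iInf_iff_real_inner_le_zero hK hp).mp (hmin.iInf_eq hp).symm z hz
  have hsplit : u - z = (u - p) - (z - p) := by abel
  rw [hsplit, norm_sub_sq_real (u - p), norm_sub_rev p z]
  nlinarith [sq_nonneg ‖u - p‖]

theorem norm_sub_smul_sub_sq (v z g : E) (α : ℝ) :
    ‖v - α • g - z‖ ^ 2 = ‖v - z‖ ^ 2 - 2 * α * ⟪g, v - z⟫ + α ^ 2 * ‖g‖ ^ 2 := by
  rw [sub_right_comm, norm_sub_sq_real, inner_smul_right, norm_smul, real_inner_comm,
    Real.norm_eq_abs, mul_pow, sq_abs]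
  ring

end

theorem stmt_8_general {n : ℕ} (Ω : Set (EuclideanSpace ℝ (Fin n)))
    (hconv : Convex ℝ Ω)
    (f : EuclideanSpace ℝ (Fin n) → ℝ) (f' : EuclideanSpace ℝ (Fin n) → EuclideanSpace ℝ (Fin n))
    (μ : ℝ) (hμ : 0 < μ)
    (hsc : ∀ z₁ ∈ Ω, ∀ z₂ ∈ Ω,
      μ * ‖z₁ - z₂‖ ^ 2 ≤ f z₂ - f z₁ - (inner ℝ (f' z₁) (z₂ - z₁) : ℝ))
    (v z : EuclideanSpace ℝ (Fin n)) (hv : v ∈ Ω) (hz : z ∈ Ω)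
    (α τ : ℝ) (hα : 0 ≤ α)
    (ghat : EuclideanSpace ℝ (Fin n)) (hghat : ‖ghat‖ ≤ τ)
    (p : EuclideanSpace ℝ (Fin n)) (hp : p ∈ Ω)
    (hproj : ∀ w ∈ Ω, ‖v - α • ghat - p‖ ≤ ‖v - α • ghat - w‖) :
    ‖p - z‖ ^ 2 ≤ (1 - μ * α) * ‖v - z‖ ^ 2 - 2 * α * (f v - f z)
      - 2 * α * (inner ℝ (ghat - f' v) (v - z) : ℝ) + α ^ 2 * τ ^ 2 := by
  have hstep := norm_sub_sq_le_of_isMinOn_norm_sub hconv hp hproj hz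
  rw [norm_sub_smul_sub_sq] at hstep
  have hsc_vz : μ * ‖v - z‖ ^ 2 ≤ f z - f v + ⟪f' v, v - z⟫ := by
    have h := hsc v hv z hz
    rwa [← neg_sub v z, inner_neg_right, sub_neg_eq_add] at h
  have hghat_sq : ‖ghat‖ ^ 2 ≤ τ ^ 2 := pow_le_pow_left₀ (norm_nonneg ghat) hghat 2
  rw [inner_sub_left]
  nlinarith [mul_le_mul_of_nonneg_left hghat_sq (sq_nonneg α),
    mul_le_mul_of_nonneg_left hsc_vz hα, mul_nonneg (mul_nonneg hμ.le hα) (sq_nonneg ‖v - z‖)]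

theorem stmt_8 {n : ℕ} (Ω : Set (EuclideanSpace ℝ (Fin n)))
    (hne : Ω.Nonempty) (hclosed : IsClosed Ω) (hconv : Convex ℝ Ω)
    (f : EuclideanSpace ℝ (Fin n) → ℝ) (f' : EuclideanSpace ℝ (Fin n) → EuclideanSpace ℝ (Fin n))
    (hdiff : ∀ x, HasGradientAt f (f' x) x)
    (μ : ℝ) (hμ : 0 < μ)
    (hsc : ∀ z₁ ∈ Ω, ∀ z₂ ∈ Ω,
      μ * ‖z₁ - z₂‖ ^ 2 ≤ f z₂ - f z₁ - (inner ℝ (f' z₁) (z₂ - z₁) : ℝ))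
    (v z : EuclideanSpace ℝ (Fin n)) (hv : v ∈ Ω) (hz : z ∈ Ω)
    (α τ : ℝ) (hα : 0 ≤ α) (hτ : 0 ≤ τ)
    (ghat : EuclideanSpace ℝ (Fin n)) (hghat : ‖ghat‖ ≤ τ)
    (p : EuclideanSpace ℝ (Fin n)) (hp : p ∈ Ω)
    (hproj : ∀ w ∈ Ω, ‖v - α • ghat - p‖ ≤ ‖v - α • ghat - w‖) :
    ‖p - z‖ ^ 2 ≤ (1 - μ * α) * ‖v - z‖ ^ 2 - 2 * α * (f v - f z)
      - 2 * α * (inner ℝ (ghat - f' v) (v - z) : ℝ) + α ^ 2 * τ ^ 2 :=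
  stmt_8_general Ω hconv f f' μ hμ hsc v z hv hz α τ hα ghat hghat p hp hproj
end

section
/- Let A = (a_{ij}) be an N×N doubly stochastic matrix, let θ ≥ 0 and 0 < β < 1 be constants such that |[A^k]_{ij} − 1/N| ≤ θ β^k for every integer k > 0 and all i, j. Let (x_{i,k})_{k≥0} (i = 1,…,N) be sequences in ℝⁿ and (p_{i,k})_{k≥1} be vectors in ℝⁿ satisfying the recursion x_{i,k+1} = Σ_{j=1}^N a_{ij} x_{j,k} + p_{i,k+1} for all i and k ≥ 0. Suppose ‖x_{j,0}‖ ≤ C₁ for all j and ‖p_{j,ℓ}‖ ≤ c_{ℓ−1} for all j and all ℓ ≥ 1, where C₁ ≥ 0 and (c_k)_{k≥0} is a nonnegative sequence. Define y_k = (1/N) Σ_{i=1}^N x_{i,k}. Then for every k ≥ 0 and every i: ‖ y_{k+1} − x_{i,k+1} ‖ ≤ N θ C₁ β^{k+1} + N θ Σ_{ℓ=1}^{k} β^{k+1−ℓ} c_{ℓ−1} + 2 c_k. -/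
/-! Unrolling the recursion gives `x_{i,k} = Σ_j [A^k]_{ij} x_{j,0} + Σ_{ℓ ≤ k} Σ_j [A^{k-ℓ}]_{ij} p_{j,ℓ}`,
while unit column sums make the total `Σ_i x_{i,k}` grow by exactly `Σ_j p_{j,k}` at each step, so
`y_k` is the same expression with every weight replaced by `1/N`. In `y_{k+1} - x_{i,k+1}` each
weight `1/N - [A^m]_{ij}` with `m ≥ 1` is at most `θ β^m` by the mixing bound; only the newest input
`ℓ = k + 1`, where `A^0 = 1`, is not damped and is bounded crudely by `2 c_k`. -/

open Finset

section Recurrence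

variable {ι R E : Type*} [Fintype ι] [CommRing R] [AddCommGroup E] [Module R E]

lemma sum_smul_sum_smul (A B : Matrix ι ι R) (v : ι → E) (i : ι) :
    ∑ j, A i j • ∑ l, B j l • v l = ∑ l, (A * B) i l • v l := by
  simp only [smul_sum, smul_smul, Matrix.mul_apply, sum_smul]
  exact sum_comm

lemma sum_one_smul [DecidableEq ι] (v : ι → E) (i : ι) :
    ∑ j, (1 : Matrix ι ι R) i j • v j = v i := by
  simp [Matrix.one_apply]

theorem eq_sum_pow_smul_of_recursion [DecidableEq ι] (A : Matrix ι ι R) (x p : ι → ℕ → E)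
    (hrec : ∀ i k, x i (k + 1) = ∑ j, A i j • x j k + p i (k + 1)) (m : ℕ) (i : ι) :
    x i m = ∑ j, (A ^ m) i j • x j 0 + ∑ ℓ ∈ Icc 1 m, ∑ j, (A ^ (m - ℓ)) i j • p j ℓ := by
  induction m generalizing i with
  | zero => simp [Matrix.one_apply]
  | succ m ih =>
    have shift : ∑ j, A i j • ∑ ℓ ∈ Icc 1 m, ∑ l, (A ^ (m - ℓ)) j l • p l ℓ =
        ∑ ℓ ∈ Icc 1 m, ∑ l, (A ^ (m + 1 - ℓ)) i l • p l ℓ := by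
      simp only [smul_sum (s := Icc 1 m)]
      rw [sum_comm]
      refine sum_congr rfl fun ℓ hℓ => ?_
      rw [sum_smul_sum_smul, ← pow_succ', Nat.sub_add_comm (mem_Icc.mp hℓ).2]
    simp only [hrec i m, ih, smul_add, sum_add_distrib, sum_smul_sum_smul, ← pow_succ', shift]
    rw [sum_Icc_succ_top (by omega), Nat.sub_self, pow_zero, sum_one_smul]
    abel

theorem sum_eq_sum_add_sum_of_recursion (A : Matrix ι ι R) (hcol : ∀ j, ∑ i, A i j = 1)
    (x p : ι → ℕ → E) (hrec : ∀ i k, x i (k + 1) = ∑ j, A i j • x j k + p i (k + 1)) (m : ℕ) :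
    ∑ i, x i m = ∑ j, x j 0 + ∑ ℓ ∈ Icc 1 m, ∑ j, p j ℓ := by
  induction m with
  | zero => simp
  | succ m ih =>
    have mass : ∑ i, ∑ j, A i j • x j m = ∑ j, x j m := by
      rw [sum_comm]
      simp only [← sum_smul, hcol, one_smul]
    rw [sum_Icc_succ_top (by omega), ← add_assoc, ← ih, ← mass, ← sum_add_distrib]
    exact sum_congr rfl fun i _ => hrec i m

end Recurrence

section Bounds

variable {ι E : Type*} [Fintype ι] [SeminormedAddCommGroup E] [NormedSpace ℝ E]

lemma norm_sum_smul_le (w : ι → ℝ) (v : ι → E) {r s : ℝ} (hw : ∀ j, |w j| ≤ r)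
    (hv : ∀ j, ‖v j‖ ≤ s) : ‖∑ j, w j • v j‖ ≤ Fintype.card ι * r * s := by
  calc ‖∑ j, w j • v j‖ ≤ ∑ _j : ι, r * s := norm_sum_le_of_le _ fun j _ => by
        rw [norm_smul, Real.norm_eq_abs]
        exact mul_le_mul (hw j) (hv j) (norm_nonneg _) ((abs_nonneg _).trans (hw j))
    _ = Fintype.card ι * r * s := by simp [mul_assoc]

lemma norm_inv_card_smul_sum_le [Nonempty ι] (v : ι → E) {s : ℝ} (hv : ∀ j, ‖v j‖ ≤ s) :
    ‖(1 / (Fintype.card ι : ℝ)) • ∑ j, v j‖ ≤ s := by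
  have hcard : (Fintype.card ι : ℝ) ≠ 0 := by positivity
  calc _ ≤ Fintype.card ι * (1 / (Fintype.card ι : ℝ)) * s := by
        rw [smul_sum]
        exact norm_sum_smul_le _ _ (fun _ => (abs_of_pos (by positivity)).le) hv
    _ = s := by field_simp

end Bounds

theorem stmt_11_general {N n : ℕ} (A : Matrix (Fin N) (Fin N) ℝ)
    (hcol : ∀ j, ∑ i, A i j = 1)
    (θ : ℝ) (β : ℝ)
    (hmix : ∀ k : ℕ, 0 < k → ∀ i j, |(A ^ k) i j - 1 / (N : ℝ)| ≤ θ * β ^ k)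
    (x : Fin N → ℕ → EuclideanSpace ℝ (Fin n))
    (p : Fin N → ℕ → EuclideanSpace ℝ (Fin n))
    (hrec : ∀ i k, x i (k + 1) = (∑ j, A i j • x j k) + p i (k + 1))
    (C₁ : ℝ) (hx0 : ∀ j, ‖x j 0‖ ≤ C₁)
    (c : ℕ → ℝ)
    (hp : ∀ j, ∀ ℓ : ℕ, 1 ≤ ℓ → ‖p j ℓ‖ ≤ c (ℓ - 1))
    (y : ℕ → EuclideanSpace ℝ (Fin n))
    (hy : ∀ k, y k = (1 / (N : ℝ)) • ∑ i, x i k) :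
    ∀ (k : ℕ) (i : Fin N),
      ‖y (k + 1) - x i (k + 1)‖ ≤
        N * θ * C₁ * β ^ (k + 1) +
          N * θ * (∑ ℓ ∈ Finset.Icc 1 k, β ^ (k + 1 - ℓ) * c (ℓ - 1)) + 2 * c k := by
  intro k i
  have : Nonempty (Fin N) := ⟨i⟩
  have hdev : ∀ m, 0 < m → ∀ j, |1 / (N : ℝ) - (A ^ m) i j| ≤ θ * β ^ m := fun m hm j => by
    rw [abs_sub_comm]
    exact hmix m hm i j
  have hdiff : y (k + 1) - x i (k + 1) =
      ∑ j, (1 / (N : ℝ) - (A ^ (k + 1)) i j) • x j 0 +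
        ∑ ℓ ∈ Icc 1 k, ∑ j, (1 / (N : ℝ) - (A ^ (k + 1 - ℓ)) i j) • p j ℓ +
        ((1 / (N : ℝ)) • ∑ j, p j (k + 1) - p i (k + 1)) := by
    rw [hy, sum_eq_sum_add_sum_of_recursion A hcol x p hrec, eq_sum_pow_smul_of_recursion A x p hrec,
      sum_Icc_succ_top (by omega), sum_Icc_succ_top (by omega), Nat.sub_self, pow_zero,
      sum_one_smul]
    simp only [sub_smul, sum_sub_distrib, smul_add, smul_sum]
    abel
  have hpk : ∀ j, ‖p j (k + 1)‖ ≤ c k := fun j => hp j (k + 1) (by omega)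
  rw [hdiff]
  refine (norm_add₃_le).trans (add_le_add (add_le_add ?_ ?_) ?_)
  · exact (norm_sum_smul_le _ _ (hdev _ k.succ_pos) hx0).trans_eq (by simp; ring)
  · rw [mul_sum]
    refine (norm_sum_le _ _).trans (sum_le_sum fun ℓ hℓ => ?_)
    obtain ⟨hℓ1, hℓk⟩ := mem_Icc.mp hℓ
    exact (norm_sum_smul_le _ _ (hdev _ (by omega)) (hp · ℓ hℓ1)).trans_eq (by simp; ring)
  · have hmean := norm_inv_card_smul_sum_le (fun j => p j (k + 1)) hpk
    rw [Fintype.card_fin] at hmean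
    linarith [norm_sub_le ((1 / (N : ℝ)) • ∑ j, p j (k + 1)) (p i (k + 1)), hpk i]

theorem stmt_11 {N n : ℕ} (A : Matrix (Fin N) (Fin N) ℝ)
    (hnonneg : ∀ i j, 0 ≤ A i j)
    (hrow : ∀ i, ∑ j, A i j = 1) (hcol : ∀ j, ∑ i, A i j = 1)
    (θ : ℝ) (hθ : 0 ≤ θ) (β : ℝ) (hβ0 : 0 < β) (hβ1 : β < 1)
    (hmix : ∀ k : ℕ, 0 < k → ∀ i j, |(A ^ k) i j - 1 / (N : ℝ)| ≤ θ * β ^ k)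
    (x : Fin N → ℕ → EuclideanSpace ℝ (Fin n))
    (p : Fin N → ℕ → EuclideanSpace ℝ (Fin n))
    (hrec : ∀ i k, x i (k + 1) = (∑ j, A i j • x j k) + p i (k + 1))
    (C₁ : ℝ) (hC₁ : 0 ≤ C₁) (hx0 : ∀ j, ‖x j 0‖ ≤ C₁)
    (c : ℕ → ℝ) (hc : ∀ k, 0 ≤ c k)
    (hp : ∀ j, ∀ ℓ : ℕ, 1 ≤ ℓ → ‖p j ℓ‖ ≤ c (ℓ - 1))
    (y : ℕ → EuclideanSpace ℝ (Fin n))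
    (hy : ∀ k, y k = (1 / (N : ℝ)) • ∑ i, x i k) :
    ∀ (k : ℕ) (i : Fin N),
      ‖y (k + 1) - x i (k + 1)‖ ≤
        N * θ * C₁ * β ^ (k + 1) +
          N * θ * (∑ ℓ ∈ Finset.Icc 1 k, β ^ (k + 1 - ℓ) * c (ℓ - 1)) + 2 * c k :=
  stmt_11_general A hcol θ β hmix x p hrec C₁ hx0 c hp y hy
end
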